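/- arXiv:2201.08189 — 3 statements merged into one kernel-verified Lean document; each statement's English description precedes it below -/
import Mathlib

section
/- Let n ≥ 1, let D ∈ ℝ^{n×n} be the diagonal matrix with entries λ₁ < λ₂ < ⋯ < λ_n, and let A₁, …, A_N ∈ ℝ^{n×n} be symmetric matrices. Then there exist real diagonal matrices D₁, …, D_N ∈ ℝ^{n×n}, a constant C > 0 and ε₀ > 0 such that for every ε ∈ (0, ε₀] there is a unitary matrix 𝔘 ∈ ℂ^{n×n} with ‖𝔘 − I‖ ≤ C·ε and ‖𝔘·(D + Σ_{j=1}^N ε^j·A_j)·𝔘* − (D + Σ_{j=1}^N ε^j·D_j)‖ ≤ C·ε^{N+1}. -/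
/-!
Write `D + Σ ε^(j+1) A_j` as a real polynomial matrix `M(ε)` and look for `U(ε)` as the Cayley
transform `(1 - T)⁻¹ (1 + T)` of a real skew-symmetric polynomial matrix `T` with `T(0) = 0`;
such a `U` is unitary as soon as `1 - T` is invertible, and `U = 1 + O(ε)`. For the diagonal
polynomial matrix `L(ε) = D + Σ ε^(j+1) D_j`,
`U M U⋆ - L = (1 - T)⁻¹ E (1 + T)⁻¹` with the *polynomial* defect
`E = (1 + T) M (1 - T) - (1 - T) L (1 + T)`, so it suffices to make `E` divisible by `X^(N+1)`.
This is done one order at a time: adding `X^k τ` to `T` and `X^k Δ` to `L` changes the lowest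
coefficient `G` of `E` (a symmetric matrix) by `2 (τ D - D τ) - Δ`. Since the `λ_i` are distinct,
`τ_ij = G_ij / (2 (λ_i - λ_j))` removes its off-diagonal part, `Δ = diag G` its diagonal part,
and `τ` is skew-symmetric because `G` is symmetric.
-/

open Ring

theorem Commute.ringInverse_left {M₀ : Type*} [MonoidWithZero M₀] {a b : M₀} (h : Commute a b) :
    Commute a⁻¹ʳ b := by
  by_cases ha : IsUnit a
  · obtain ⟨u, rfl⟩ := ha
    rw [Ring.inverse_unit]
    exact h.units_inv_left
  · rw [Ring.inverse_non_unit _ ha]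
    exact Commute.zero_left b

section Cayley

variable {R : Type*} [Ring R]

def cayleyDefect (m t l : R) : R := (1 + t) * m * (1 - t) - (1 - t) * l * (1 + t)

theorem cayleyDefect_add (m t s l δ : R) :
    cayleyDefect m (t + s) (l + δ) = cayleyDefect m t l +
      (s * m * (1 - (t + s)) - (1 + t) * m * s + s * (l + δ) * (1 + (t + s))
        - (1 - t) * δ * (1 + (t + s)) - (1 - t) * l * s) := by
  unfold cayleyDefect; noncomm_ring

theorem map_cayleyDefect {S F : Type*} [Ring S] [FunLike F R S] [RingHomClass F R S]
    (f : F) (m t l : R) : f (cayleyDefect m t l) = cayleyDefect (f m) (f t) (f l) := by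
  simp only [cayleyDefect, map_sub, map_mul, map_add, map_one]

noncomputable def cayley (t : R) : R := (1 - t)⁻¹ʳ * (1 + t)

theorem cayley_sub_one {t : R} (h : IsUnit (1 - t)) : cayley t - 1 = (1 - t)⁻¹ʳ * (t + t) := by
  have : (1 - t)⁻¹ʳ * (t + t) = (1 - t)⁻¹ʳ * (1 + t) - (1 - t)⁻¹ʳ * (1 - t) := by
    rw [← mul_sub]; congr 1; abel
  rw [this, Ring.inverse_mul_cancel _ h, cayley]

variable [StarRing R] {t : R}

theorem star_one_sub_of_star_eq_neg (ht : star t = -t) : star (1 - t) = 1 + t := by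
  rw [star_sub, star_one, ht, sub_neg_eq_add]

theorem star_one_add_of_star_eq_neg (ht : star t = -t) : star (1 + t) = 1 - t := by
  rw [star_add, star_one, ht, ← sub_eq_add_neg]

theorem star_cayley (ht : star t = -t) : star (cayley t) = (1 - t) * (1 + t)⁻¹ʳ := by
  rw [cayley, star_mul, star_one_add_of_star_eq_neg ht, ← Ring.inverse_star,
    star_one_sub_of_star_eq_neg ht]

theorem cayley_mem_unitary (ht : star t = -t) (h : IsUnit (1 - t)) : cayley t ∈ unitary R := by
  have h' : IsUnit (1 + t) := star_one_sub_of_star_eq_neg ht ▸ h.star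
  have hc : Commute (1 - t) (1 + t) := by
    simp only [Commute, SemiconjBy]; noncomm_ring
  have hU : cayley t = (1 + t) * (1 - t)⁻¹ʳ := hc.ringInverse_left.eq
  have hU' : star (cayley t) = (1 + t)⁻¹ʳ * (1 - t) := by
    rw [hU, star_mul, star_one_add_of_star_eq_neg ht, ← Ring.inverse_star,
      star_one_sub_of_star_eq_neg ht]
  rw [Unitary.mem_iff]
  constructor
  · rw [hU', cayley, mul_assoc, Ring.mul_inverse_cancel_left _ _ h, Ring.inverse_mul_cancel _ h']
  · rw [star_cayley ht, hU, mul_assoc, Ring.inverse_mul_cancel_left _ _ h,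
      Ring.mul_inverse_cancel _ h']

theorem cayley_conj_sub (ht : star t = -t) (h : IsUnit (1 - t)) (m l : R) :
    cayley t * m * star (cayley t) - l = (1 - t)⁻¹ʳ * cayleyDefect m t l * (1 + t)⁻¹ʳ := by
  have h' : IsUnit (1 + t) := star_one_sub_of_star_eq_neg ht ▸ h.star
  rw [cayleyDefect, mul_sub, sub_mul]
  congr 1
  · rw [star_cayley ht]; simp only [cayley, mul_assoc]
  · simp only [← mul_assoc, Ring.inverse_mul_cancel _ h, one_mul]
    rw [mul_assoc, Ring.mul_inverse_cancel _ h', mul_one]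

end Cayley

open Polynomial Matrix Finset Function

section Algebraic

variable {ι : Type*} [Fintype ι] [DecidableEq ι]

section CommRing

variable {S : Type*} [CommRing S]

theorem transpose_cayleyDefect {m t l : Matrix ι ι S} (hm : mᵀ = m) (ht : tᵀ = -t)
    (hl : lᵀ = l) : (cayleyDefect m t l)ᵀ = cayleyDefect m t l := by
  simp only [cayleyDefect, transpose_sub, transpose_mul, transpose_add, transpose_one, hm, ht, hl]
  noncomm_ring

theorem constantCoeff_mapMatrix_X_pow_smul {k : ℕ} (hk : k ≠ 0) (P : Matrix ι ι S[X]) :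
    constantCoeff.mapMatrix ((X ^ k : S[X]) • P) = 0 := by
  ext i j; simp [Ne.symm hk]

theorem constantCoeff_mapMatrix_C_mapMatrix (B : Matrix ι ι S) :
    constantCoeff.mapMatrix (C.mapMatrix B) = B := by
  ext i j; simp

theorem eq_X_smul_map_divX {P : Matrix ι ι S[X]} (hP : constantCoeff.mapMatrix P = 0) :
    P = (X : S[X]) • P.map divX := by
  refine Matrix.ext fun i j => ?_
  have h := X_mul_divX_add (P i j)
  have h0 : (P i j).coeff 0 = 0 := congrFun (congrFun hP i) j
  rw [h0, map_zero, add_zero] at h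
  exact h.symm

theorem transpose_C_mapMatrix (B : Matrix ι ι S) : (C.mapMatrix B)ᵀ = C.mapMatrix Bᵀ := by
  simp only [RingHom.mapMatrix_apply, transpose_map]

noncomputable def matrixPolynomial {N : ℕ} (B₀ : Matrix ι ι S) (B : Fin N → Matrix ι ι S) :
    Matrix ι ι S[X] :=
  C.mapMatrix B₀ + ∑ j : Fin N, (X ^ ((j : ℕ) + 1) : S[X]) • C.mapMatrix (B j)

theorem transpose_matrixPolynomial {N : ℕ} (B₀ : Matrix ι ι S) (B : Fin N → Matrix ι ι S) :
    (matrixPolynomial B₀ B)ᵀ = matrixPolynomial B₀ᵀ fun j => (B j)ᵀ := by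
  simp only [matrixPolynomial, transpose_add, transpose_sum, transpose_smul, transpose_C_mapMatrix]

theorem constantCoeff_mapMatrix_matrixPolynomial {N : ℕ} (B₀ : Matrix ι ι S)
    (B : Fin N → Matrix ι ι S) : constantCoeff.mapMatrix (matrixPolynomial B₀ B) = B₀ := by
  rw [matrixPolynomial, map_add, map_sum, constantCoeff_mapMatrix_C_mapMatrix]
  simp only [constantCoeff_mapMatrix_X_pow_smul (Nat.succ_ne_zero _), sum_const_zero, add_zero]

theorem matrixPolynomial_snoc {N : ℕ} (B₀ : Matrix ι ι S) (B : Fin N → Matrix ι ι S)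
    (B' : Matrix ι ι S) : matrixPolynomial B₀ (Fin.snoc B B' : Fin (N + 1) → Matrix ι ι S) =
      matrixPolynomial B₀ B + (X ^ (N + 1) : S[X]) • C.mapMatrix B' := by
  simp only [matrixPolynomial, Fin.sum_univ_castSucc, Fin.snoc_castSucc, Fin.snoc_last,
    Fin.val_castSucc, Fin.val_last, add_assoc]

end CommRing

variable {K : Type*} [Field K] [NeZero (2 : K)] {lam : ι → K}

theorem exists_skew_add_commutator_eq_diagonal (hlam : Injective lam) {G : Matrix ι ι K}
    (hG : Gᵀ = G) : ∃ τ : Matrix ι ι K, τᵀ = -τ ∧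
      G + 2 • (τ * diagonal lam - diagonal lam * τ) = diagonal fun i => G i i := by
  -- the diagonal entries are `G i i / 0 = 0`
  refine ⟨of fun i j => G i j / (2 * (lam i - lam j)), ?_, ?_⟩
  · ext i j
    have hGji : G j i = G i j := congrFun (congrFun hG i) j
    rw [transpose_apply, neg_apply, of_apply, of_apply, hGji, ← div_neg]
    congr 1; ring
  · ext i j
    rcases eq_or_ne i j with rfl | hij
    · simp [two_smul]
    · have : lam i - lam j ≠ 0 := sub_ne_zero.mpr (hlam.ne hij)
      simp only [two_smul, Matrix.add_apply, Matrix.sub_apply, mul_diagonal, of_apply, diagonal_mul,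
        diagonal_apply_ne _ hij]
      field_simp
      ring

theorem exists_cayleyDefect_eq_X_pow_succ_smul (hlam : Injective lam) {M T L R : Matrix ι ι K[X]}
    (hM : Mᵀ = M) (hM0 : constantCoeff.mapMatrix M = diagonal lam) (hT : Tᵀ = -T)
    (hT0 : constantCoeff.mapMatrix T = 0) (hL : Lᵀ = L)
    (hL0 : constantCoeff.mapMatrix L = diagonal lam) {k : ℕ} (hk : k ≠ 0)
    (hR : cayleyDefect M T L = (X ^ k : K[X]) • R) :
    ∃ τ : Matrix ι ι K, τᵀ = -τ ∧ ∃ Δ : ι → K, ∃ R' : Matrix ι ι K[X],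
      cayleyDefect M (T + (X ^ k : K[X]) • C.mapMatrix τ)
        (L + (X ^ k : K[X]) • C.mapMatrix (diagonal Δ)) = (X ^ (k + 1) : K[X]) • R' := by
  have hRsymm : Rᵀ = R := by
    have h := transpose_cayleyDefect hM hT hL
    rw [hR, transpose_smul] at h
    exact smul_right_injective _ (pow_ne_zero k X_ne_zero) h
  set G := constantCoeff.mapMatrix R
  have hG : Gᵀ = G := by
    simp only [G, RingHom.mapMatrix_apply, ← transpose_map, hRsymm]
  obtain ⟨τ, hτ, hτG⟩ := exists_skew_add_commutator_eq_diagonal hlam hG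
  refine ⟨τ, hτ, fun i => G i i, ?_⟩
  set τ' := C.mapMatrix τ
  set Δ' := C.mapMatrix (diagonal fun i => G i i)
  set x : K[X] := X ^ k
  -- `x • W` is the correction term of `cayleyDefect_add`
  set W := τ' * M * (1 - (T + x • τ')) - (1 + T) * M * τ' + τ' * (L + x • Δ') * (1 + (T + x • τ'))
    - (1 - T) * Δ' * (1 + (T + x • τ')) - (1 - T) * L * τ'
  have hW0 : constantCoeff.mapMatrix W = 2 • (τ * diagonal lam - diagonal lam * τ) -
      diagonal fun i => G i i := by
    simp only [W, τ', Δ', x, map_sub, map_add, map_mul, map_one, hT0, hM0, hL0,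
      constantCoeff_mapMatrix_X_pow_smul hk, constantCoeff_mapMatrix_C_mapMatrix, add_zero,
      sub_zero, mul_one, one_mul, two_smul]
    abel
  have hRW : constantCoeff.mapMatrix (R + W) = 0 := by
    rw [map_add, hW0, ← hτG]; abel
  refine ⟨(R + W).map divX, ?_⟩
  rw [cayleyDefect_add, hR, pow_succ, ← smul_smul, ← eq_X_smul_map_divX hRW, smul_add]
  congr 1
  simp only [W, x, smul_add, smul_sub, smul_mul_assoc, mul_smul_comm]

theorem exists_cayleyDefect_eq_X_pow_smul (hlam : Injective lam)
    {M : Matrix ι ι K[X]} (hM : Mᵀ = M) (hM0 : constantCoeff.mapMatrix M = diagonal lam) (N : ℕ) :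
    ∃ T : Matrix ι ι K[X], Tᵀ = -T ∧ constantCoeff.mapMatrix T = 0 ∧
      ∃ d : Fin N → ι → K, ∃ R : Matrix ι ι K[X],
        cayleyDefect M T (matrixPolynomial (diagonal lam) fun j => diagonal (d j)) =
          (X ^ (N + 1) : K[X]) • R := by
  induction N with
  | zero =>
    refine ⟨0, by simp, map_zero _, 0, ?_⟩
    have h0 : constantCoeff.mapMatrix
        (cayleyDefect M 0 (matrixPolynomial (diagonal lam) fun j : Fin 0 => diagonal 0)) = 0 := by
      simp only [cayleyDefect, add_zero, sub_zero, mul_one, one_mul, map_sub, hM0,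
        constantCoeff_mapMatrix_matrixPolynomial, sub_self]
    exact ⟨_, by rw [zero_add, pow_one]; exact eq_X_smul_map_divX h0⟩
  | succ N ih =>
    obtain ⟨T, hT, hT0, d, R, hR⟩ := ih
    obtain ⟨τ, hτ, Δ, R', hR'⟩ := exists_cayleyDefect_eq_X_pow_succ_smul hlam hM hM0 hT hT0
      (by simp [transpose_matrixPolynomial]) (constantCoeff_mapMatrix_matrixPolynomial _ _)
      N.succ_ne_zero hR
    refine ⟨T + (X ^ (N + 1) : K[X]) • C.mapMatrix τ, ?_, ?_, Fin.snoc d Δ, R', ?_⟩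
    · rw [transpose_add, transpose_smul, transpose_C_mapMatrix, hT, hτ, map_neg, smul_neg, neg_add]
    · rw [map_add, hT0, constantCoeff_mapMatrix_X_pow_smul N.succ_ne_zero, add_zero]
    · rw [← Function.comp_def diagonal, Fin.comp_snoc, matrixPolynomial_snoc]
      exact hR'

end Algebraic

open Asymptotics Filter Topology

section NormedRing

variable {R α : Type*} [NormedRing R] [HasSummableGeomSeries R] {l : Filter α} {t : α → R}
  {g : α → ℝ}

theorem eventually_isUnit_one_sub (ht : Tendsto t l (𝓝 0)) : ∀ᶠ x in l, IsUnit (1 - t x) :=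
  ht.eventually <| Metric.eventually_nhds_iff.mpr
    ⟨1, one_pos, fun _ hy => isUnit_one_sub_of_norm_lt_one (by rwa [dist_zero_right] at hy)⟩

theorem isBigO_cayley_sub_one (ht : t =O[l] g) (hg : Tendsto g l (𝓝 0)) :
    (fun x => cayley (t x) - 1) =O[l] g := by
  have htl := ht.trans_tendsto hg
  have h := (NormedRing.inverse_one_sub_norm.comp_tendsto htl).mul (ht.add ht)
  refine h.congr' ?_ (EventuallyEq.of_eq (funext fun x => one_mul (g x)))
  filter_upwards [eventually_isUnit_one_sub htl] with x hx using (cayley_sub_one hx).symm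

theorem isBigO_cayley_conj_sub [StarRing R] {a b : α → R} {h : α → ℝ} (ht : t =O[l] g)
    (hg : Tendsto g l (𝓝 0)) (hstar : ∀ x, star (t x) = -t x)
    (hdef : (fun x => cayleyDefect (a x) (t x) (b x)) =O[l] h) :
    (fun x => cayley (t x) * a x * star (cayley (t x)) - b x) =O[l] h := by
  have htl := ht.trans_tendsto hg
  have hinv₁ := NormedRing.inverse_one_sub_norm.comp_tendsto htl
  have hinv₂ := NormedRing.inverse_one_sub_norm.comp_tendsto (neg_zero (G := R) ▸ htl.neg)
  refine ((hinv₁.mul hdef).mul hinv₂).congr' ?_ (EventuallyEq.of_eq (funext fun x => ?_))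
  · filter_upwards [eventually_isUnit_one_sub htl] with x hx
    simp only [Function.comp_apply, sub_neg_eq_add]
    exact (cayley_conj_sub (hstar x) hx (a x) (b x)).symm
  · simp

end NormedRing

section Analytic

attribute [local instance] Matrix.linftyOpNormedAddCommGroup Matrix.linftyOpNormedRing
  Matrix.linftyOpNormedAlgebra

theorem norm_entry_le_linfty_opNorm {m n α : Type*} [Fintype m] [Fintype n]
    [NormedAddCommGroup α] (A : Matrix m n α) (i : m) (j : n) : ‖A i j‖ ≤ ‖A‖ :=
  (PiLp.norm_apply_le (WithLp.toLp 1 (A i)) j).trans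
    (norm_le_pi_norm (fun i => WithLp.toLp 1 (A i)) i)

variable {ι : Type*} [Fintype ι] [DecidableEq ι]

noncomputable def evalMatrix (ε : ℝ) : Matrix ι ι ℝ[X] →+* Matrix ι ι ℂ :=
  (Complex.ofRealHom.comp (evalRingHom ε)).mapMatrix

theorem continuous_evalMatrix (P : Matrix ι ι ℝ[X]) : Continuous fun ε => evalMatrix ε P :=
  continuous_pi fun i => continuous_pi fun j => Complex.continuous_ofReal.comp (P i j).continuous

theorem evalMatrix_X_pow_smul (ε : ℝ) (k : ℕ) (P : Matrix ι ι ℝ[X]) :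
    evalMatrix ε ((X ^ k : ℝ[X]) • P) = ε ^ k • evalMatrix ε P := by
  ext i j; simp [evalMatrix, Complex.real_smul]

theorem star_evalMatrix (ε : ℝ) (P : Matrix ι ι ℝ[X]) :
    star (evalMatrix ε P) = evalMatrix ε Pᵀ := by
  ext i j; simp [evalMatrix]

theorem evalMatrix_matrixPolynomial (ε : ℝ) {N : ℕ} (B₀ : Matrix ι ι ℝ)
    (B : Fin N → Matrix ι ι ℝ) : evalMatrix ε (matrixPolynomial B₀ B) =
      (B₀ + ∑ j : Fin N, ε ^ ((j : ℕ) + 1) • B j).map fun r => (r : ℂ) := by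
  ext i k
  simp only [evalMatrix, matrixPolynomial, RingHom.mapMatrix_apply, RingHom.coe_comp,
    coe_evalRingHom, map_apply, Matrix.add_apply, Matrix.sum_apply, Matrix.smul_apply, smul_eq_mul,
    X_pow_mul_C, Function.comp_apply, eval_add, eval_C, eval_finsetSum, eval_mul, eval_pow, eval_X,
    Complex.ofRealHom_eq_coe, Complex.ofReal_add, Complex.ofReal_sum, Complex.ofReal_mul,
    Complex.ofReal_pow, add_right_inj]
  exact Finset.sum_congr rfl fun j _ => mul_comm _ _

theorem isBigO_evalMatrix_X_pow_smul (P : Matrix ι ι ℝ[X]) (k : ℕ) :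
    (fun ε => evalMatrix ε ((X ^ k : ℝ[X]) • P)) =O[𝓝 0] fun ε => ε ^ k := by
  simpa [evalMatrix_X_pow_smul] using
    (isBigO_refl (fun ε : ℝ => ε ^ k) _).smul (((continuous_evalMatrix P).tendsto 0).isBigO_one ℝ)

theorem exists_unitary_of_cayleyDefect_eq_X_pow_smul {N : ℕ} {M T L R : Matrix ι ι ℝ[X]}
    (hT : Tᵀ = -T) (hT0 : constantCoeff.mapMatrix T = 0)
    (hR : cayleyDefect M T L = (X ^ (N + 1) : ℝ[X]) • R) :
    ∃ C > (0 : ℝ), ∃ ε₀ > (0 : ℝ), ∀ ε : ℝ, 0 < ε → ε ≤ ε₀ →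
      ∃ U ∈ unitary (Matrix ι ι ℂ), ∀ i k, ‖(U - 1) i k‖ ≤ C * ε ∧
        ‖(U * evalMatrix ε M * star U - evalMatrix ε L) i k‖ ≤ C * ε ^ (N + 1) := by
  set t := fun ε => evalMatrix ε T
  have ht : t =O[𝓝 0] fun ε => ε := by
    simpa only [pow_one, ← eq_X_smul_map_divX hT0] using isBigO_evalMatrix_X_pow_smul (T.map divX) 1
  have hstar (ε : ℝ) : star (t ε) = -t ε := by rw [star_evalMatrix, hT, map_neg]
  have hdef : (fun ε => cayleyDefect (evalMatrix ε M) (t ε) (evalMatrix ε L)) =O[𝓝 0]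
      fun ε => ε ^ (N + 1) :=
    (isBigO_evalMatrix_X_pow_smul R (N + 1)).congr_left fun ε => by rw [← hR, map_cayleyDefect]
  obtain ⟨c₁, hc₁, h₁⟩ := (isBigO_cayley_sub_one ht tendsto_id).exists_pos
  obtain ⟨c₂, -, h₂⟩ := (isBigO_cayley_conj_sub ht tendsto_id hstar hdef).exists_pos
  have hev : ∀ᶠ ε in 𝓝 0, cayley (t ε) ∈ unitary (Matrix ι ι ℂ) ∧
      ‖cayley (t ε) - 1‖ ≤ c₁ * ‖ε‖ ∧
      ‖cayley (t ε) * evalMatrix ε M * star (cayley (t ε)) - evalMatrix ε L‖ ≤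
        c₂ * ‖ε ^ (N + 1)‖ := by
    filter_upwards [eventually_isUnit_one_sub (ht.trans_tendsto tendsto_id), h₁.bound, h₂.bound]
      with ε hu h1 h2 using ⟨cayley_mem_unitary (hstar ε) hu, h1, h2⟩
  obtain ⟨ε₀, hε₀, hsub⟩ := mem_nhdsGT_iff_exists_Ioc_subset.mp (nhdsWithin_le_nhds hev)
  refine ⟨max c₁ c₂, lt_max_of_lt_left hc₁, ε₀, hε₀, fun ε hε hεle => ?_⟩
  obtain ⟨hU, h1, h2⟩ := hsub ⟨hε, hεle⟩
  rw [Real.norm_of_nonneg hε.le] at h1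
  rw [Real.norm_of_nonneg (by positivity)] at h2
  refine ⟨_, hU, fun i k => ⟨?_, ?_⟩⟩
  · exact (norm_entry_le_linfty_opNorm _ i k).trans (h1.trans (by gcongr; exact le_max_left _ _))
  · exact (norm_entry_le_linfty_opNorm _ i k).trans (h2.trans (by gcongr; exact le_max_right _ _))

end Analytic

theorem stmt11_general (n N : ℕ) (lam : Fin n → ℝ) (hlam : StrictMono lam)
    (A : Fin N → Matrix (Fin n) (Fin n) ℝ) (hA : ∀ j, (A j).IsSymm) :
    ∃ Dd : Fin N → (Fin n → ℝ), ∃ C > (0 : ℝ), ∃ ε₀ > (0 : ℝ),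
      ∀ ε : ℝ, 0 < ε → ε ≤ ε₀ →
        ∃ U : Matrix (Fin n) (Fin n) ℂ,
          U * U.conjTranspose = 1 ∧ U.conjTranspose * U = 1 ∧
          (∀ i k, ‖(U - 1) i k‖ ≤ C * ε) ∧
          (∀ i k,
            ‖(U *
                (Matrix.diagonal lam +
                  ∑ j : Fin N, ε ^ ((j : ℕ) + 1) • A j).map (fun r => (r : ℂ)) *
                U.conjTranspose -
              (Matrix.diagonal lam +
                  ∑ j : Fin N, ε ^ ((j : ℕ) + 1) • Matrix.diagonal (Dd j)).map
                (fun r => (r : ℂ))) i k‖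
            ≤ C * ε ^ (N + 1)) := by
  have hM : (matrixPolynomial (diagonal lam) A)ᵀ = matrixPolynomial (diagonal lam) A := by
    simp only [transpose_matrixPolynomial, diagonal_transpose, fun j => (hA j).eq]
  obtain ⟨T, hT, hT0, d, R, hR⟩ := exists_cayleyDefect_eq_X_pow_smul hlam.injective hM
    (constantCoeff_mapMatrix_matrixPolynomial _ _) N
  obtain ⟨C, hC, ε₀, hε₀, h⟩ := exists_unitary_of_cayleyDefect_eq_X_pow_smul hT hT0 hR
  refine ⟨d, C, hC, ε₀, hε₀, fun ε hε hεle => ?_⟩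
  obtain ⟨U, hU, hbound⟩ := h ε hε hεle
  simp only [evalMatrix_matrixPolynomial] at hbound
  exact ⟨U, hU.2, hU.1, fun i k => (hbound i k).1, fun i k => (hbound i k).2⟩

theorem stmt11 (n N : ℕ) (hn : 1 ≤ n) (lam : Fin n → ℝ) (hlam : StrictMono lam)
    (A : Fin N → Matrix (Fin n) (Fin n) ℝ) (hA : ∀ j, (A j).IsSymm) :
    ∃ Dd : Fin N → (Fin n → ℝ), ∃ C > (0 : ℝ), ∃ ε₀ > (0 : ℝ),
      ∀ ε : ℝ, 0 < ε → ε ≤ ε₀ →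
        ∃ U : Matrix (Fin n) (Fin n) ℂ,
          U * U.conjTranspose = 1 ∧ U.conjTranspose * U = 1 ∧
          (∀ i k, ‖(U - 1) i k‖ ≤ C * ε) ∧
          (∀ i k,
            ‖(U *
                (Matrix.diagonal lam +
                  ∑ j : Fin N, ε ^ ((j : ℕ) + 1) • A j).map (fun r => (r : ℂ)) *
                U.conjTranspose -
              (Matrix.diagonal lam +
                  ∑ j : Fin N, ε ^ ((j : ℕ) + 1) • Matrix.diagonal (Dd j)).map
                (fun r => (r : ℂ))) i k‖
            ≤ C * ε ^ (N + 1)) :=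
  stmt11_general n N lam hlam A hA
end

section
/- Let ν ≥ 1 and let g : ℝ → ℂ be continuous and compactly supported. Let (h_n) ⊂ (0,1) with h_n → 0 and (γ_n) ⊂ (0,∞) with γ_n → ∞ and γ_n ≤ C·log(1/h_n) for some constant C > 0. Then γ_n · ∫_ℝ |g(t)|² · exp( 2tγ_n − (2t^{ν+1}/((ν+1)h_n))·1_{t≥0}(t) ) dt → |g(0)|²/2 as n → ∞. In particular, if g(0) = 1 and C_h is defined by the normalization ‖C_h·g(t)·exp(tγ_h − (t^{ν+1}/((ν+1)h))·1_{t≥0})‖_{L²(ℝ)} = 1, then C_h^{−2} = 1/(2γ_h) + o(1/γ_h) as h → 0⁺. -/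
/-!
Substituting `t = s / γ` turns `γ ∫ |g(t)|² e^{2tγ - 2 𝐛₀(t)/h · 1_{t ≥ 0}} dt` into
`∫ |g(s/γ)|² e^{2s - 2 s^{ν+1}/ε · 1_{s ≥ 0}} ds` with `ε = (ν + 1) h γ^{ν+1}`, and the bound
`γ ≤ C log (1/h)` gives `h ≤ e^{-γ/C}`, so `ε → 0`. Once `ε ≤ 2/3` the integrand is dominated
by `sup |g|² · e^{3 - |s|}`; as `ε → 0` it vanishes on `s > 0` and tends to `|g(0)|² e^{2s}`
on `s < 0`. Dominated convergence gives the limit `|g(0)|² ∫_{-∞}^0 e^{2s} ds = |g(0)|²/2`.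
-/

open MeasureTheory Real Filter Set Topology

/-- For `q = ν + 1` and `a = (ν + 1) h` this is the exponent `2 𝐛₀(t)/h · 1_{t ≥ 0}`. -/
noncomputable def penalty (q a t : ℝ) : ℝ :=
  if 0 ≤ t then 2 * t ^ q / a else 0

lemma penalty_of_neg {q a t : ℝ} (ht : t < 0) : penalty q a t = 0 :=
  if_neg ht.not_ge

lemma measurable_penalty (q a : ℝ) : Measurable (penalty q a) :=
  Measurable.ite measurableSet_Ici (by fun_prop) measurable_const

lemma penalty_div {q γ : ℝ} (a : ℝ) (hγ : 0 < γ) (s : ℝ) :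
    penalty q a (s / γ) = penalty q (a * γ ^ q) s := by
  by_cases hs : 0 ≤ s
  · simp only [penalty, hs, div_nonneg hs hγ.le, if_true, div_rpow hs hγ.le]
    field_simp
  · simp [penalty, hs, div_nonneg_iff, hγ.not_ge]

lemma sub_one_le_rpow {s q : ℝ} (hs : 0 ≤ s) (hq : 1 ≤ q) : s - 1 ≤ s ^ q := by
  rcases le_or_gt s 1 with hs1 | hs1
  · linarith [rpow_nonneg hs q]
  · linarith [self_le_rpow_of_one_le hs1.le hq]

lemma two_mul_sub_penalty_le {q ε : ℝ} (hq : 1 ≤ q) (hε : 0 < ε) (hε' : ε ≤ 2 / 3) (s : ℝ) :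
    2 * s - penalty q ε s ≤ 3 - |s| := by
  rcases lt_or_ge s 0 with hs | hs
  · rw [penalty_of_neg hs, abs_of_neg hs]
    linarith
  · have hsq := sub_one_le_rpow hs hq
    have : 3 * s ^ q ≤ 2 * s ^ q / ε := by
      rw [le_div_iff₀ hε]
      nlinarith [rpow_nonneg hs q]
    simp only [penalty, if_pos hs, abs_of_nonneg hs]
    linarith

lemma tendsto_exp_two_mul_sub_penalty {ι : Type*} {l : Filter ι} {q : ℝ} {ε : ι → ℝ}
    (hε : Tendsto ε l (𝓝[>] 0)) {s : ℝ} (hs : s ≠ 0) :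
    Tendsto (fun i => exp (2 * s - penalty q (ε i) s)) l
      (𝓝 ((Iic 0).indicator (fun s => exp (2 * s)) s)) := by
  rcases hs.lt_or_gt with hs | hs
  · simp only [penalty_of_neg hs, sub_zero, indicator_of_mem (mem_Iic.2 hs.le)]
    exact tendsto_const_nhds
  · have hpen : Tendsto (fun i => 2 * s ^ q / ε i) l atTop :=
      (tendsto_inv_nhdsGT_zero.comp hε).const_mul_atTop (by positivity)
    simp only [penalty, if_pos hs.le, indicator_of_notMem (notMem_Iic.2 hs)]
    exact tendsto_exp_atBot.comp
      (tendsto_atBot_add_const_left _ _ (tendsto_neg_atTop_atBot.comp hpen))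

lemma integrable_exp_neg_abs : Integrable fun s : ℝ => exp (-|s|) := by
  have hIic : IntegrableOn (fun s : ℝ => exp (-|s|)) (Iic 0) :=
    (integrableOn_exp_Iic 0).congr_fun (fun s hs => by rw [abs_of_nonpos hs, neg_neg])
      measurableSet_Iic
  have hIoi : IntegrableOn (fun s : ℝ => exp (-|s|)) (Ioi 0) :=
    (exp_neg_integrableOn_Ioi 0 one_pos).congr_fun
      (fun s hs => by simp [abs_of_pos (mem_Ioi.1 hs)]) measurableSet_Ioi
  simpa only [Iic_union_Ioi, integrableOn_univ] using hIic.union hIoi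

theorem tendsto_integral_comp_div_mul_exp_sub_penalty {ι : Type*} {l : Filter ι}
    [l.IsCountablyGenerated] {q B : ℝ} (hq : 1 ≤ q) {f : ℝ → ℝ} (hfm : Measurable f)
    (hfB : ∀ t, ‖f t‖ ≤ B) (hf0 : ContinuousAt f 0) {γ ε : ι → ℝ}
    (hγ : Tendsto γ l atTop) (hε : Tendsto ε l (𝓝[>] 0)) :
    Tendsto (fun i => ∫ s, f (s / γ i) * exp (2 * s - penalty q (ε i) s)) l
      (𝓝 (f 0 / 2)) := by
  have hlim : ∫ s, f 0 * (Iic 0).indicator (fun s => exp (2 * s)) s = f 0 / 2 := by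
    rw [integral_const_mul, integral_indicator measurableSet_Iic, integral_exp_mul_Iic two_pos]
    simp [div_eq_mul_inv]
  rw [← hlim]
  refine tendsto_integral_filter_of_dominated_convergence (fun s => B * exp 3 * exp (-|s|))
    (Eventually.of_forall fun i => ?_) ?_ (integrable_exp_neg_abs.const_mul _) ?_
  · exact ((hfm.comp (measurable_id.div_const _)).mul
      (measurable_exp.comp (measurable_id.const_mul 2 |>.sub (measurable_penalty _ _)))
      ).aestronglyMeasurable
  · have hsmall : ∀ᶠ i in l, ε i ∈ Ioc 0 (2 / 3) :=
      hε (Ioc_mem_nhdsGT (by norm_num))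
    filter_upwards [hsmall] with i ⟨hε0, hε1⟩
    refine Eventually.of_forall fun s => ?_
    rw [norm_mul, norm_of_nonneg (exp_nonneg _), mul_assoc, ← exp_add, ← sub_eq_add_neg]
    exact mul_le_mul (hfB _) (exp_le_exp.2 (two_mul_sub_penalty_le hq hε0 hε1 s))
      (exp_nonneg _) ((norm_nonneg _).trans (hfB 0))
  · have hne : ∀ᵐ s : ℝ, s ≠ 0 := by
      simp [ae_iff, measure_singleton]
    filter_upwards [hne] with s hs
    exact (hf0.tendsto.comp (tendsto_const_nhds.div_atTop hγ)).mul
      (tendsto_exp_two_mul_sub_penalty hε hs)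

lemma mul_integral_mul_exp_sub_penalty (f : ℝ → ℝ) {q a γ : ℝ} (hγ : 0 < γ) :
    γ * ∫ t, f t * exp (2 * t * γ - penalty q a t) =
      ∫ s, f (s / γ) * exp (2 * s - penalty q (a * γ ^ q) s) := by
  rw [← abs_of_pos hγ, ← smul_eq_mul, ← Measure.integral_comp_div, abs_of_pos hγ]
  congr 1 with s
  rw [penalty_div a hγ, mul_assoc, div_mul_cancel₀ s hγ.ne']

lemma tendsto_mul_rpow_of_le_mul_log {ι : Type*} {l : Filter ι} {h γ : ι → ℝ} {C : ℝ} (p : ℝ)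
    (hC : 0 < C) (hh : ∀ i, 0 < h i) (hγ : Tendsto γ l atTop)
    (hγlog : ∀ i, γ i ≤ C * log (1 / h i)) :
    Tendsto (fun i => h i * γ i ^ p) l (𝓝 0) := by
  have hh_le : ∀ i, h i ≤ exp (-(1 / C) * γ i) := fun i => by
    have hlog : γ i ≤ C * -log (h i) := by simpa only [one_div, log_inv] using hγlog i
    rw [← log_le_iff_le_exp (hh i), neg_mul, le_neg, one_div_mul_eq_div, div_le_iff₀ hC]
    linarith
  have hγ0 : ∀ᶠ i in l, 0 ≤ γ i := hγ.eventually_ge_atTop 0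
  refine squeeze_zero' (hγ0.mono fun i hi => mul_nonneg (hh i).le (rpow_nonneg hi p))
    (hγ0.mono fun i hi => ?_)
    ((tendsto_rpow_mul_exp_neg_mul_atTop_nhds_zero p (1 / C) (by positivity)).comp hγ)
  rw [mul_comm]
  exact mul_le_mul_of_nonneg_left (hh_le i) (rpow_nonneg hi p)

theorem stmt12_general (ν : ℝ) (hν : 1 ≤ ν) (g : ℝ → ℂ)
    (hg : Continuous g) (hgsupp : HasCompactSupport g)
    (h γ : ℕ → ℝ) (C : ℝ) (hC : 0 < C)
    (hh : ∀ n, h n ∈ Set.Ioo (0 : ℝ) 1)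
    (hγpos : ∀ n, 0 < γ n)
    (hγtop : Filter.Tendsto γ Filter.atTop Filter.atTop)
    (hγlog : ∀ n, γ n ≤ C * Real.log (1 / h n)) :
    Filter.Tendsto
        (fun n => γ n * ∫ t : ℝ, ‖g t‖ ^ 2 *
          Real.exp (2 * t * γ n -
            (if 0 ≤ t then 2 * t ^ (ν + 1) / ((ν + 1) * h n) else 0)))
        Filter.atTop (nhds (‖g 0‖ ^ 2 / 2)) ∧
      (g 0 = 1 → ∀ Ch : ℕ → ℝ,
        (∀ n, 0 < Ch n ∧
          (Ch n) ^ 2 * (∫ t : ℝ, ‖g t‖ ^ 2 *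
            Real.exp (2 * t * γ n -
              (if 0 ≤ t then 2 * t ^ (ν + 1) / ((ν + 1) * h n) else 0))) = 1) →
        Filter.Tendsto (fun n => γ n / (Ch n) ^ 2) Filter.atTop (nhds (1 / 2))) := by
  obtain ⟨B, hB⟩ := hgsupp.exists_bound_of_continuous hg
  have hε : Tendsto (fun n => (ν + 1) * h n * γ n ^ (ν + 1)) atTop (𝓝[>] 0) := by
    refine tendsto_nhdsWithin_iff.2 ⟨?_, Eventually.of_forall fun n => ?_⟩
    · simpa only [mul_assoc, mul_zero] using (tendsto_mul_rpow_of_le_mul_log (ν + 1) hC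
        (fun n => (hh n).1) hγtop hγlog).const_mul (ν + 1)
    · exact mul_pos (mul_pos (by linarith) (hh n).1) (rpow_pos_of_pos (hγpos n) _)
  have hgB : ∀ t, ‖‖g t‖ ^ 2‖ ≤ B ^ 2 := fun t => by
    rw [norm_pow, norm_norm]
    exact pow_le_pow_left₀ (norm_nonneg _) (hB t) 2
  have key := (tendsto_integral_comp_div_mul_exp_sub_penalty (f := fun t => ‖g t‖ ^ 2)
    (by linarith : 1 ≤ ν + 1) (hg.norm.pow 2).measurable hgB (hg.norm.pow 2).continuousAt
    hγtop hε).congr fun n => (mul_integral_mul_exp_sub_penalty (fun t => ‖g t‖ ^ 2) (hγpos n)).symm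
  refine ⟨key, fun hg0 Ch hCh => ?_⟩
  rw [hg0, norm_one, one_pow] at key
  refine key.congr fun n => ?_
  rw [div_eq_mul_inv, inv_eq_of_mul_eq_one_right (hCh n).2]
  rfl

theorem stmt12 (ν : ℝ) (hν : 1 ≤ ν) (g : ℝ → ℂ)
    (hg : Continuous g) (hgsupp : HasCompactSupport g)
    (h γ : ℕ → ℝ) (C : ℝ) (hC : 0 < C)
    (hh : ∀ n, h n ∈ Set.Ioo (0 : ℝ) 1)
    (hh0 : Filter.Tendsto h Filter.atTop (nhds 0))
    (hγpos : ∀ n, 0 < γ n)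
    (hγtop : Filter.Tendsto γ Filter.atTop Filter.atTop)
    (hγlog : ∀ n, γ n ≤ C * Real.log (1 / h n)) :
    Filter.Tendsto
        (fun n => γ n * ∫ t : ℝ, ‖g t‖ ^ 2 *
          Real.exp (2 * t * γ n -
            (if 0 ≤ t then 2 * t ^ (ν + 1) / ((ν + 1) * h n) else 0)))
        Filter.atTop (nhds (‖g 0‖ ^ 2 / 2)) ∧
      (g 0 = 1 → ∀ Ch : ℕ → ℝ,
        (∀ n, 0 < Ch n ∧
          (Ch n) ^ 2 * (∫ t : ℝ, ‖g t‖ ^ 2 *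
            Real.exp (2 * t * γ n -
              (if 0 ≤ t then 2 * t ^ (ν + 1) / ((ν + 1) * h n) else 0))) = 1) →
        Filter.Tendsto (fun n => γ n / (Ch n) ^ 2) Filter.atTop (nhds (1 / 2))) :=
  stmt12_general ν hν g hg hgsupp h γ C hC hh hγpos hγtop hγlog
end

section
/- Let M > 0 and let W : ℝ → ℝ be continuously differentiable with |W(z)| ≤ M and |W'(z)| ≤ M for all z. Then there exists C = C(M) > 0 such that for every integer n ≥ 1 and every smooth compactly supported w : ℝ → ℂ, writing L_n w := −w'' + n·W(z/√n)²·w, one has √n·‖∂_z( W(z/√n)·w )‖_{L²(ℝ)} + √n·‖W(z/√n)·w'‖_{L²(ℝ)} + ‖w''‖_{L²(ℝ)} + n·‖W(z/√n)²·w‖_{L²(ℝ)} ≤ C·( ‖L_n w‖_{L²(ℝ)} + ‖w‖_{L²(ℝ)} ). -/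
/-!
Put `V = b²` with `|b'| ≤ K`. Expanding `‖-w'' + V w‖²` and integrating the cross term
`-2 ∫ V ⟪w'', w⟫` by parts gives `‖w''‖² + ‖V w‖² + 2 ∫ V ‖w'‖² + 2 ∫ V' ⟪w', w⟫`. Since
`|V'| = 2 |b| |b'| ≤ 2 K √V`, the last term is absorbed by AM-GM into `∫ V ‖w'‖² + 4 K² ‖w‖²`,
which bounds `‖w''‖`, `‖V w‖` and `‖b w'‖`; the product rule then bounds `‖(b w)'‖`. The theorem is
the case `b z = √n W(z/√n)`, whose derivative `W'(z/√n)` is bounded by `M`.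
-/

open MeasureTheory Real RealInnerProductSpace

lemma Continuous.integrable_of_eq_zero_off_tsupport {F : Type*} [TopologicalSpace F] [Zero F]
    {f : ℝ → ℝ} (hf : Continuous f) {w : ℝ → F} (hw : HasCompactSupport w)
    (h : ∀ z ∉ tsupport w, f z = 0) : Integrable f :=
  hf.integrable_of_hasCompactSupport <| hw.mono' fun z hz => by_contra fun hzw => hz (h z hzw)

variable {E : Type*} [NormedAddCommGroup E] [InnerProductSpace ℝ E] {w : ℝ → E} {V : ℝ → ℝ}

lemma deriv_deriv_of_notMem_tsupport {z : ℝ} (h : z ∉ tsupport w) : deriv (deriv w) z = 0 :=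
  deriv_of_notMem_tsupport fun hz => h (tsupport_deriv_subset hz)

lemma integral_mul_inner_deriv_deriv (hw : ContDiff ℝ 2 w) (hws : HasCompactSupport w)
    (hV : ContDiff ℝ 1 V) :
    ∫ z, V z * ⟪deriv (deriv w) z, w z⟫ =
      -(∫ z, V z * ‖deriv w z‖ ^ 2) - ∫ z, deriv V z * ⟪deriv w z, w z⟫ := by
  have hw1 : ContDiff ℝ 1 (deriv w) := (contDiff_succ_iff_deriv.mp hw).2.2
  have hwD := hw.differentiable two_ne_zero
  have hw1D := hw1.differentiable one_ne_zero
  have hVD := hV.differentiable one_ne_zero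
  have hwc := hw.continuous
  have hw1c := hw1.continuous
  have hw2c := hw1.continuous_deriv le_rfl
  have hVc := hV.continuous
  have hV'c := hV.continuous_deriv le_rfl
  have int1 : Integrable fun z => V z * ⟪deriv (deriv w) z, w z⟫ :=
    (by fun_prop : Continuous _).integrable_of_eq_zero_off_tsupport hws fun z hz => by
      simp [image_eq_zero_of_notMem_tsupport hz]
  have int2 : Integrable fun z => V z * ‖deriv w z‖ ^ 2 :=
    (by fun_prop : Continuous _).integrable_of_eq_zero_off_tsupport hws fun z hz => by
      simp [deriv_of_notMem_tsupport hz]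
  have int3 : Integrable fun z => deriv V z * ⟪deriv w z, w z⟫ :=
    (by fun_prop : Continuous _).integrable_of_eq_zero_off_tsupport hws fun z hz => by
      simp [image_eq_zero_of_notMem_tsupport hz]
  have int0 : Integrable fun z => V z * ⟪deriv w z, w z⟫ :=
    (by fun_prop : Continuous _).integrable_of_eq_zero_off_tsupport hws fun z hz => by
      simp [image_eq_zero_of_notMem_tsupport hz]
  have hderiv : ∀ z, HasDerivAt (fun t => V t * ⟪deriv w t, w t⟫)
      (deriv V z * ⟪deriv w z, w z⟫ +
        (V z * ‖deriv w z‖ ^ 2 + V z * ⟪deriv (deriv w) z, w z⟫)) z := by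
    intro z
    refine ((hVD z).hasDerivAt.mul
      ((hw1D z).hasDerivAt.inner ℝ (hwD z).hasDerivAt)).congr_deriv ?_
    rw [real_inner_self_eq_norm_sq]
    ring
  have hzero := integral_eq_zero_of_hasDerivAt_of_integrable hderiv
    (int3.fun_add (int2.fun_add int1)) int0
  rw [integral_add int3 (int2.fun_add int1), integral_add int2 int1] at hzero
  linarith

lemma integral_norm_sq_neg_deriv_deriv_add_smul (hw : ContDiff ℝ 2 w) (hws : HasCompactSupport w)
    (hV : ContDiff ℝ 1 V) :
    ∫ z, ‖-deriv (deriv w) z + V z • w z‖ ^ 2 =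
      (∫ z, ‖deriv (deriv w) z‖ ^ 2) + (∫ z, ‖V z • w z‖ ^ 2) +
        2 * (∫ z, V z * ‖deriv w z‖ ^ 2) + 2 * ∫ z, deriv V z * ⟪deriv w z, w z⟫ := by
  have hwc := hw.continuous
  have hw2c : Continuous (deriv (deriv w)) :=
    (contDiff_succ_iff_deriv.mp hw).2.2.continuous_deriv le_rfl
  have hVc := hV.continuous
  have int1 : Integrable fun z => ‖deriv (deriv w) z‖ ^ 2 :=
    (by fun_prop : Continuous _).integrable_of_eq_zero_off_tsupport hws fun z hz => by
      simp [deriv_deriv_of_notMem_tsupport hz]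
  have int2 : Integrable fun z => V z * ⟪deriv (deriv w) z, w z⟫ :=
    (by fun_prop : Continuous _).integrable_of_eq_zero_off_tsupport hws fun z hz => by
      simp [image_eq_zero_of_notMem_tsupport hz]
  have int3 : Integrable fun z => ‖V z • w z‖ ^ 2 :=
    (by fun_prop : Continuous _).integrable_of_eq_zero_off_tsupport hws fun z hz => by
      simp [image_eq_zero_of_notMem_tsupport hz]
  have hexpand : ∀ z, ‖-deriv (deriv w) z + V z • w z‖ ^ 2 =
      ‖deriv (deriv w) z‖ ^ 2 - 2 * (V z * ⟪deriv (deriv w) z, w z⟫) + ‖V z • w z‖ ^ 2 := by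
    intro z
    rw [neg_add_eq_sub, ← norm_neg, neg_sub, norm_sub_sq_real, real_inner_smul_right,
      ← real_inner_comm]
  simp_rw [hexpand]
  rw [integral_add (int1.sub' (int2.const_mul 2)) int3, integral_sub int1 (int2.const_mul 2),
    integral_const_mul, integral_mul_inner_deriv_deriv hw hws hV]
  ring

lemma integral_norm_sq_deriv_deriv_add_le {K : ℝ} (hw : ContDiff ℝ 2 w)
    (hws : HasCompactSupport w) (hV : ContDiff ℝ 1 V) (hV0 : ∀ z, 0 ≤ V z)
    (hVK : ∀ z, |deriv V z| ≤ 2 * K * √(V z)) :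
    (∫ z, ‖deriv (deriv w) z‖ ^ 2) + (∫ z, ‖V z • w z‖ ^ 2) + ∫ z, V z * ‖deriv w z‖ ^ 2 ≤
      (∫ z, ‖-deriv (deriv w) z + V z • w z‖ ^ 2) + 4 * K ^ 2 * ∫ z, ‖w z‖ ^ 2 := by
  have hwc := hw.continuous
  have hw1c : Continuous (deriv w) := hw.continuous_deriv one_le_two
  have hVc := hV.continuous
  have hV'c := hV.continuous_deriv le_rfl
  have int1 : Integrable fun z => deriv V z * ⟪deriv w z, w z⟫ :=
    (by fun_prop : Continuous _).integrable_of_eq_zero_off_tsupport hws fun z hz => by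
      simp [image_eq_zero_of_notMem_tsupport hz]
  have int2 : Integrable fun z => V z * ‖deriv w z‖ ^ 2 :=
    (by fun_prop : Continuous _).integrable_of_eq_zero_off_tsupport hws fun z hz => by
      simp [deriv_of_notMem_tsupport hz]
  have int3 : Integrable fun z => ‖w z‖ ^ 2 :=
    (by fun_prop : Continuous _).integrable_of_eq_zero_off_tsupport hws fun z hz => by
      simp [image_eq_zero_of_notMem_tsupport hz]
  -- AM-GM, after `|V'| ≤ 2K√V` and Cauchy–Schwarz
  have hpoint : ∀ z, -2 * (deriv V z * ⟪deriv w z, w z⟫) ≤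
      V z * ‖deriv w z‖ ^ 2 + 4 * K ^ 2 * ‖w z‖ ^ 2 := by
    intro z
    have hCS := abs_real_inner_le_norm (deriv w z) (w z)
    have hsq := sq_sqrt (hV0 z)
    have := abs_mul (deriv V z) ⟪deriv w z, w z⟫
    nlinarith [neg_abs_le (deriv V z * ⟪deriv w z, w z⟫),
      sq_nonneg (√(V z) * ‖deriv w z‖ - 2 * K * ‖w z‖),
      mul_le_mul (hVK z) hCS (abs_nonneg _) ((abs_nonneg _).trans (hVK z)),
      norm_nonneg (w z), norm_nonneg (deriv w z)]
  have hint := integral_mono (int1.const_mul (-2)) (int2.fun_add (int3.const_mul _)) hpoint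
  rw [integral_const_mul, integral_add int2 (int3.const_mul _), integral_const_mul] at hint
  rw [integral_norm_sq_neg_deriv_deriv_add_smul hw hws hV]
  linarith

lemma integral_norm_sq_deriv_smul_le {b : ℝ → ℝ} {K : ℝ} (hb : ContDiff ℝ 1 b)
    (hbK : ∀ z, |deriv b z| ≤ K) (hw : ContDiff ℝ 1 w) (hws : HasCompactSupport w) :
    ∫ z, ‖deriv (fun t => b t • w t) z‖ ^ 2 ≤
      2 * K ^ 2 * (∫ z, ‖w z‖ ^ 2) + 2 * ∫ z, ‖b z • deriv w z‖ ^ 2 := by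
  have hderiv : deriv (fun t => b t • w t) = fun z => b z • deriv w z + deriv b z • w z :=
    funext fun z => deriv_smul (hb.differentiable one_ne_zero z) (hw.differentiable one_ne_zero z)
  have hwc := hw.continuous
  have hw1c := hw.continuous_deriv le_rfl
  have hbc := hb.continuous
  have hb'c := hb.continuous_deriv le_rfl
  have int1 : Integrable fun z => ‖b z • deriv w z + deriv b z • w z‖ ^ 2 :=
    (by fun_prop : Continuous _).integrable_of_eq_zero_off_tsupport hws fun z hz => by
      simp [image_eq_zero_of_notMem_tsupport hz, deriv_of_notMem_tsupport hz]
  have int2 : Integrable fun z => ‖w z‖ ^ 2 :=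
    (by fun_prop : Continuous _).integrable_of_eq_zero_off_tsupport hws fun z hz => by
      simp [image_eq_zero_of_notMem_tsupport hz]
  have int3 : Integrable fun z => ‖b z • deriv w z‖ ^ 2 :=
    (by fun_prop : Continuous _).integrable_of_eq_zero_off_tsupport hws fun z hz => by
      simp [deriv_of_notMem_tsupport hz]
  have hpoint : ∀ z, ‖b z • deriv w z + deriv b z • w z‖ ^ 2 ≤
      2 * K ^ 2 * ‖w z‖ ^ 2 + 2 * ‖b z • deriv w z‖ ^ 2 := by
    intro z
    have hb'w : ‖deriv b z • w z‖ ≤ K * ‖w z‖ := by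
      rw [norm_smul, Real.norm_eq_abs]
      exact mul_le_mul_of_nonneg_right (hbK z) (norm_nonneg _)
    calc ‖b z • deriv w z + deriv b z • w z‖ ^ 2
        ≤ (‖b z • deriv w z‖ + K * ‖w z‖) ^ 2 := by
          gcongr
          exact (norm_add_le _ _).trans (add_le_add_right hb'w _)
      _ ≤ 2 * K ^ 2 * ‖w z‖ ^ 2 + 2 * ‖b z • deriv w z‖ ^ 2 := by
          nlinarith [add_sq_le (a := ‖b z • deriv w z‖) (b := K * ‖w z‖)]
  rw [hderiv, ← integral_const_mul, ← integral_const_mul,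
    ← integral_add (int2.const_mul _) (int3.const_mul _)]
  exact integral_mono int1 ((int2.const_mul _).fun_add (int3.const_mul _)) hpoint

lemma sqrt_le_mul_sqrt_add_mul_sqrt {x y z a c : ℝ} (hy : 0 ≤ y) (hz : 0 ≤ z) (ha : 0 ≤ a)
    (hc : 0 ≤ c) (h : x ≤ a ^ 2 * y + c ^ 2 * z) : √x ≤ a * √y + c * √z := by
  rw [sqrt_le_left (by positivity)]
  nlinarith [sq_sqrt hy, sq_sqrt hz,
    mul_nonneg (mul_nonneg ha hc) (mul_nonneg (sqrt_nonneg y) (sqrt_nonneg z))]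

theorem sqrt_integral_norm_sq_le_of_abs_deriv_le {b : ℝ → ℝ} {K : ℝ} (hb : ContDiff ℝ 1 b)
    (hK : 0 ≤ K) (hbK : ∀ z, |deriv b z| ≤ K) (hw : ContDiff ℝ 2 w) (hws : HasCompactSupport w) :
    √(∫ z, ‖deriv (fun t => b t • w t) z‖ ^ 2) + √(∫ z, ‖b z • deriv w z‖ ^ 2) +
        √(∫ z, ‖deriv (deriv w) z‖ ^ 2) + √(∫ z, ‖b z ^ 2 • w z‖ ^ 2) ≤
      (5 + 10 * K) * (√(∫ z, ‖-deriv (deriv w) z + b z ^ 2 • w z‖ ^ 2) + √(∫ z, ‖w z‖ ^ 2)) := by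
  have hV : ContDiff ℝ 1 fun z => b z ^ 2 := hb.pow 2
  have hVK : ∀ z, |deriv (fun z => b z ^ 2) z| ≤ 2 * K * √(b z ^ 2) := by
    intro z
    rw [deriv_fun_pow (hb.differentiable one_ne_zero z), sqrt_sq_eq_abs]
    norm_num [abs_mul]
    nlinarith [abs_nonneg (b z), hbK z]
  have hVw : ∀ z, b z ^ 2 * ‖deriv w z‖ ^ 2 = ‖b z • deriv w z‖ ^ 2 := fun z => by
    rw [norm_smul, mul_pow, Real.norm_eq_abs, sq_abs]
  have hmain := integral_norm_sq_deriv_deriv_add_le hw hws hV (fun z => sq_nonneg (b z)) hVK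
  have hprod := integral_norm_sq_deriv_smul_le hb hbK (hw.of_le one_le_two) hws
  simp only [hVw] at hmain
  set F := ∫ z, ‖-deriv (deriv w) z + b z ^ 2 • w z‖ ^ 2
  set N := ∫ z, ‖w z‖ ^ 2
  set A := ∫ z, ‖deriv (fun t => b t • w t) z‖ ^ 2
  set B := ∫ z, ‖b z • deriv w z‖ ^ 2
  set C := ∫ z, ‖deriv (deriv w) z‖ ^ 2
  set D := ∫ z, ‖b z ^ 2 • w z‖ ^ 2
  have hF : 0 ≤ F := integral_nonneg fun _ => by positivity
  have hN : 0 ≤ N := integral_nonneg fun _ => by positivity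
  have hB0 : 0 ≤ B := integral_nonneg fun _ => by positivity
  have hC0 : 0 ≤ C := integral_nonneg fun _ => by positivity
  have hD0 : 0 ≤ D := integral_nonneg fun _ => by positivity
  have bound (x a c : ℝ) (ha : 0 ≤ a) (hc : 0 ≤ c) (h : x ≤ a ^ 2 * F + c ^ 2 * N) :=
    sqrt_le_mul_sqrt_add_mul_sqrt hF hN ha hc h
  have hA := bound A 2 (4 * K) zero_le_two (by positivity) (by nlinarith)
  have hB := bound B 1 (2 * K) zero_le_one (by positivity) (by nlinarith)
  have hC := bound C 1 (2 * K) zero_le_one (by positivity) (by nlinarith)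
  have hD := bound D 1 (2 * K) zero_le_one (by positivity) (by nlinarith)
  nlinarith [mul_nonneg hK (sqrt_nonneg F), sqrt_nonneg N]

lemma sqrt_integral_norm_sq_smul (c : ℝ) (f : ℝ → E) :
    √(∫ z, ‖c • f z‖ ^ 2) = |c| * √(∫ z, ‖f z‖ ^ 2) := by
  simp_rw [norm_smul, mul_pow, Real.norm_eq_abs, sq_abs]
  rw [integral_const_mul, sqrt_mul (sq_nonneg c), sqrt_sq_eq_abs]

lemma hasDerivAt_mul_comp_div {W : ℝ → ℝ} {s z : ℝ} (hs : s ≠ 0)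
    (hW : DifferentiableAt ℝ W (z / s)) :
    HasDerivAt (fun t => s * W (t / s)) (deriv W (z / s)) z :=
  ((hW.hasDerivAt.comp z ((hasDerivAt_id z).div_const s)).const_mul s).congr_deriv
    (by field_simp)

theorem stmt16_general (M : ℝ) (W : ℝ → ℝ) (hW : ContDiff ℝ 1 W)
    (hWb' : ∀ z, |deriv W z| ≤ M) :
    ∃ C > (0 : ℝ), ∀ n : ℕ, 1 ≤ n →
      ∀ w : ℝ → ℂ, ContDiff ℝ (⊤ : ℕ∞) w → HasCompactSupport w →
        Real.sqrt (n : ℝ) *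
            Real.sqrt (∫ z : ℝ,
              ‖deriv (fun t => ((W (t / Real.sqrt (n : ℝ)) : ℝ) : ℂ) * w t) z‖ ^ 2) +
          Real.sqrt (n : ℝ) *
            Real.sqrt (∫ z : ℝ,
              ‖((W (z / Real.sqrt (n : ℝ)) : ℝ) : ℂ) * deriv w z‖ ^ 2) +
          Real.sqrt (∫ z : ℝ, ‖iteratedDeriv 2 w z‖ ^ 2) +
          (n : ℝ) *
            Real.sqrt (∫ z : ℝ,
              ‖(((W (z / Real.sqrt (n : ℝ))) ^ 2 : ℝ) : ℂ) * w z‖ ^ 2)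
        ≤ C * (Real.sqrt (∫ z : ℝ,
              ‖-(iteratedDeriv 2 w z) +
                  (((n : ℝ) * (W (z / Real.sqrt (n : ℝ))) ^ 2 : ℝ) : ℂ) * w z‖ ^ 2) +
            Real.sqrt (∫ z : ℝ, ‖w z‖ ^ 2)) := by
  have hM : 0 ≤ M := (abs_nonneg _).trans (hWb' 0)
  refine ⟨5 + 10 * M, by positivity, fun n hn w hw hws => ?_⟩
  set s := √(n : ℝ)
  have hs : 0 < s := sqrt_pos.mpr (by exact_mod_cast hn)
  set b : ℝ → ℝ := fun z => s * W (z / s)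
  have hb : ContDiff ℝ 1 b := contDiff_const.mul (hW.comp (contDiff_id.div_const s))
  have hb' (z : ℝ) : deriv b z = deriv W (z / s) :=
    (hasDerivAt_mul_comp_div hs.ne' (hW.differentiable one_ne_zero _)).deriv
  have hb2 (z : ℝ) : b z ^ 2 = n * W (z / s) ^ 2 := by
    rw [mul_pow, sq_sqrt (Nat.cast_nonneg n)]
  have key := sqrt_integral_norm_sq_le_of_abs_deriv_le hb hM (fun z => hb' z ▸ hWb' _)
    (hw.of_le (by norm_cast)) hws
  have hsmul (c a : ℝ) (x : ℂ) : (c * a) • x = c • ((a : ℂ) * x) := by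
    rw [mul_smul, Complex.real_smul (x := a)]
  rw [show iteratedDeriv 2 w = deriv (deriv w) by rw [iteratedDeriv_succ, iteratedDeriv_one]]
  calc _ = √(∫ z, ‖deriv (fun t => b t • w t) z‖ ^ 2) + √(∫ z, ‖b z • deriv w z‖ ^ 2) +
        √(∫ z, ‖deriv (deriv w) z‖ ^ 2) + √(∫ z, ‖b z ^ 2 • w z‖ ^ 2) := by
        simp_rw [hb2, b, hsmul, deriv_fun_const_smul_field, sqrt_integral_norm_sq_smul,
          abs_of_pos hs, Nat.abs_cast]
    _ ≤ _ := key
    _ = _ := by simp_rw [← hb2]; rfl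

theorem stmt16 (M : ℝ) (hM : 0 < M) (W : ℝ → ℝ) (hW : ContDiff ℝ 1 W)
    (hWb : ∀ z, |W z| ≤ M) (hWb' : ∀ z, |deriv W z| ≤ M) :
    ∃ C > (0 : ℝ), ∀ n : ℕ, 1 ≤ n →
      ∀ w : ℝ → ℂ, ContDiff ℝ (⊤ : ℕ∞) w → HasCompactSupport w →
        Real.sqrt (n : ℝ) *
            Real.sqrt (∫ z : ℝ,
              ‖deriv (fun t => ((W (t / Real.sqrt (n : ℝ)) : ℝ) : ℂ) * w t) z‖ ^ 2) +
          Real.sqrt (n : ℝ) *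
            Real.sqrt (∫ z : ℝ,
              ‖((W (z / Real.sqrt (n : ℝ)) : ℝ) : ℂ) * deriv w z‖ ^ 2) +
          Real.sqrt (∫ z : ℝ, ‖iteratedDeriv 2 w z‖ ^ 2) +
          (n : ℝ) *
            Real.sqrt (∫ z : ℝ,
              ‖(((W (z / Real.sqrt (n : ℝ))) ^ 2 : ℝ) : ℂ) * w z‖ ^ 2)
        ≤ C * (Real.sqrt (∫ z : ℝ,
              ‖-(iteratedDeriv 2 w z) +
                  (((n : ℝ) * (W (z / Real.sqrt (n : ℝ))) ^ 2 : ℝ) : ℂ) * w z‖ ^ 2) +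
            Real.sqrt (∫ z : ℝ, ‖w z‖ ^ 2)) :=
  stmt16_general M W hW hWb'
end
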